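/- There is a constant c_d > 0 depending only on d such that: let K ⊆ ℝ^d (d ≥ 2) be a convex body and ε > 0 with K ⊆ [−(1−2ε), 1−2ε]^d, and let U = K^{(2ε)} and U* its projective dual. For every t > 0 there exists a finite set P ⊆ frontier(U*) with card(P) ≤ c_d / t such that: for every q ∈ ∂̄K^{(ε)} and every outward unit normal u of S(K) at q, setting CBase = U* ∩ {y : y_d = ⟨q̂, ŷ⟩ − q_d + ε}, if H^{d−1}(π(CBase)) ≥ t then some point y ∈ P satisfies y_d ≤ ⟨q̂, ŷ⟩ − q_d + ε. -/

import Mathlib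

/-!
Let `U = K^{(2ε)}` and `V = U*`. For `q` on the lower boundary with outward normal `u`, the affine
function `h(y) = y_d - ⟨q̂, ŷ⟩ + q_d` is nonnegative on `V`, and `u` gives the slope of a supporting
hyperplane, i.e. a point of `V` with `h = 0`; the caps of the statement are `V ∩ {h ≤ ε}`. Each of
them lies over `[-2, 2]^{d-1}` in the slab of thickness `ε` above the lower boundary of `V`, which
has volume `4^{d-1} ε`. Shrinking the base of a cap towards the point with `h = 0` shows that if the
base has area at least `t`, the cap `V ∩ {h ≤ ε/6}` has volume at least `12^{-d} t ε`.

Take a maximal family of points of `V` whose half Macbeath regions are pairwise disjoint, lie in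
the slab and have volume at least `48^{-d} t ε`; it has at most `4^{d-1} 48^d / t` members. If a
large cap missed all of them, averaging over `V ∩ {h ≤ ε/6}` would give a centre `x₀` there whose
half Macbeath region has volume at least `48^{-d} t ε`, and by Macbeath's lemma (`h x ≤ 6 h x₀`
whenever the half regions of `x` and `x₀` meet) it would be disjoint from the others, contradicting
maximality. Finally the chosen points are pushed down vertically onto the boundary of `V`.
-/

open MeasureTheory Metric Set
open scoped RealInnerProductSpace ENNReal

noncomputable section

/-- Vertical projection `ℝ^d = ℝ^{d-1} × ℝ → ℝ^{d-1}` (forget the last coordinate). -/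
def vproj (n : ℕ) (x : EuclideanSpace ℝ (Fin (n + 1))) : EuclideanSpace ℝ (Fin n) :=
  WithLp.toLp 2 (fun j : Fin n => x j.castSucc)

/-- Lift `y ∈ ℝ^{d-1}` and `t ∈ ℝ` to the point `(y, t) ∈ ℝ^d`. -/
def vlift (n : ℕ) (y : EuclideanSpace ℝ (Fin n)) (t : ℝ) : EuclideanSpace ℝ (Fin (n + 1)) :=
  WithLp.toLp 2 (fun i : Fin (n + 1) => if h : (i : ℕ) < n then y ⟨i, h⟩ else t)

/-- The last standard basis vector `e_d` of `ℝ^d`. -/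
def ed (n : ℕ) : EuclideanSpace ℝ (Fin (n + 1)) := EuclideanSpace.single (Fin.last n) 1

/-- Support function of a set. -/
def suppFn {d : ℕ} (K : Set (EuclideanSpace ℝ (Fin d)))
    (u : EuclideanSpace ℝ (Fin d)) : ℝ :=
  sSup ((fun x => ⟪u, x⟫) '' K)

/-- Unit vectors `u` with `-u_d ≥ |u_j|` for all `j ≤ d-1` (downward-dominated directions). -/
def downDirs (n : ℕ) : Set (EuclideanSpace ℝ (Fin (n + 1))) :=
  {u | ‖u‖ = 1 ∧ ∀ j : Fin n, |u j.castSucc| ≤ -u (Fin.last n)}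

/-- The (downward) support set `S(K)`: intersection of the supporting halfspaces of `K`
with downward-dominated normals. -/
def SK {n : ℕ} (K : Set (EuclideanSpace ℝ (Fin (n + 1)))) :
    Set (EuclideanSpace ℝ (Fin (n + 1))) :=
  ⋂ u ∈ downDirs n, {x | ⟪u, x⟫ ≤ suppFn K u}

/-- The convex function whose graph is the lower boundary of `S(K)`. -/
def fK {n : ℕ} (K : Set (EuclideanSpace ℝ (Fin (n + 1)))) (y : EuclideanSpace ℝ (Fin n)) : ℝ :=
  sInf {t : ℝ | vlift n y t ∈ SK K}

/-- `K↓ ⊕ α`: points of `ℝ^{d-1}` within distance `α` of the vertical projection of `K`. -/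
def Koplus {n : ℕ} (K : Set (EuclideanSpace ℝ (Fin (n + 1)))) (α : ℝ) :
    Set (EuclideanSpace ℝ (Fin n)) :=
  {y | Metric.infDist y (vproj n '' K) ≤ α}

/-- The `α`-restricted support set `K^{(α)}`. -/
def Krestr {n : ℕ} (K : Set (EuclideanSpace ℝ (Fin (n + 1)))) (α : ℝ) :
    Set (EuclideanSpace ℝ (Fin (n + 1))) :=
  SK K ∩ {x | vproj n x ∈ Koplus K α}

/-- The lower boundary `∂̄K^{(α)}` of the restricted support set. -/
def lowerBdry {n : ℕ} (K : Set (EuclideanSpace ℝ (Fin (n + 1)))) (α : ℝ) :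
    Set (EuclideanSpace ℝ (Fin (n + 1))) :=
  (fun y => vlift n y (fK K y)) '' Koplus K α

/-- The base of the `ε`-dual cap of `K^{(2ε)}` induced by the point `q` and
outward normal `u`. -/
def DBase {n : ℕ} (K : Set (EuclideanSpace ℝ (Fin (n + 1)))) (ε : ℝ)
    (q u : EuclideanSpace ℝ (Fin (n + 1))) : Set (EuclideanSpace ℝ (Fin (n + 1))) :=
  {x | ⟪u, x - q⟫ = 0} ∩ closure (convexHull ℝ (Krestr K (2 * ε) ∪ {q - ε • ed n}))

/-- The projective dual of a U-shaped closed convex set. -/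
def Udual {n : ℕ} (U : Set (EuclideanSpace ℝ (Fin (n + 1)))) :
    Set (EuclideanSpace ℝ (Fin (n + 1))) :=
  {y | ∀ z ∈ U, ⟪vproj n y, vproj n z⟫ - z (Fin.last n) ≤ y (Fin.last n)}


section Coordinates

variable {n : ℕ}

@[simp] lemma vproj_apply (x : EuclideanSpace ℝ (Fin (n + 1))) (j : Fin n) :
    vproj n x j = x j.castSucc := rfl

@[simp] lemma vlift_castSucc (y : EuclideanSpace ℝ (Fin n)) (t : ℝ) (j : Fin n) :
    vlift n y t j.castSucc = y j := by
  simp [vlift]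

@[simp] lemma vlift_last (y : EuclideanSpace ℝ (Fin n)) (t : ℝ) :
    vlift n y t (Fin.last n) = t := by
  simp [vlift]

@[simp] lemma vproj_vlift (y : EuclideanSpace ℝ (Fin n)) (t : ℝ) :
    vproj n (vlift n y t) = y := by
  ext j; simp

@[simp] lemma vlift_vproj (x : EuclideanSpace ℝ (Fin (n + 1))) :
    vlift n (vproj n x) (x (Fin.last n)) = x := by
  ext i
  induction i using Fin.lastCases <;> simp

lemma vlift_eq_iff {y : EuclideanSpace ℝ (Fin n)} {t : ℝ} {x : EuclideanSpace ℝ (Fin (n + 1))} :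
    vlift n y t = x ↔ y = vproj n x ∧ t = x (Fin.last n) := by
  constructor
  · rintro rfl; simp
  · rintro ⟨rfl, rfl⟩; simp

@[simp] lemma vproj_add (x y : EuclideanSpace ℝ (Fin (n + 1))) :
    vproj n (x + y) = vproj n x + vproj n y := rfl

@[simp] lemma vproj_sub (x y : EuclideanSpace ℝ (Fin (n + 1))) :
    vproj n (x - y) = vproj n x - vproj n y := rfl

@[simp] lemma vproj_smul (c : ℝ) (x : EuclideanSpace ℝ (Fin (n + 1))) :
    vproj n (c • x) = c • vproj n x := rfl

@[simp] lemma vproj_ed : vproj n (ed n) = 0 := by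
  ext j; simp [ed, (Fin.castSucc_lt_last j).ne]

@[simp] lemma ed_last : ed n (Fin.last n) = 1 := by
  simp [ed]

@[simp] lemma norm_ed : ‖ed n‖ = 1 := by
  simp [ed]

lemma add_vlift (x : EuclideanSpace ℝ (Fin (n + 1))) (a : EuclideanSpace ℝ (Fin n)) (s : ℝ) :
    x + vlift n a s = vlift n (vproj n x + a) (x (Fin.last n) + s) := by
  ext i; induction i using Fin.lastCases <;> simp

lemma add_smul_ed (x : EuclideanSpace ℝ (Fin (n + 1))) (s : ℝ) :
    x + s • ed n = vlift n (vproj n x) (x (Fin.last n) + s) := by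
  ext i
  induction i using Fin.lastCases with
  | last => simp
  | cast j => simp [ed, (Fin.castSucc_lt_last j).ne]

lemma inner_split (u x : EuclideanSpace ℝ (Fin (n + 1))) :
    ⟪u, x⟫ = ⟪vproj n u, vproj n x⟫ + u (Fin.last n) * x (Fin.last n) := by
  simp only [PiLp.inner_apply, RCLike.inner_apply, conj_trivial, Fin.sum_univ_castSucc,
    vproj_apply]
  ring

@[fun_prop] lemma continuous_vproj : Continuous (vproj n) := by
  unfold vproj; fun_prop

@[fun_prop] lemma continuous_vlift :
    Continuous (fun p : EuclideanSpace ℝ (Fin n) × ℝ => vlift n p.1 p.2) := by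
  refine (PiLp.continuous_toLp 2 _).comp (continuous_pi fun i => ?_)
  split_ifs <;> fun_prop

@[fun_prop] lemma continuous_last :
    Continuous (fun x : EuclideanSpace ℝ (Fin (n + 1)) => x (Fin.last n)) :=
  (EuclideanSpace.proj (Fin.last n)).continuous

end Coordinates

section Volume

variable {n : ℕ}

lemma measurePreserving_vproj_prod_last :
    MeasurePreserving (fun y : EuclideanSpace ℝ (Fin (n + 1)) => (vproj n y, y (Fin.last n)))
      volume volume := by
  have e₁ := EuclideanSpace.volume_preserving_symm_measurableEquiv_toLp (Fin (n + 1))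
  have e₂ := volume_preserving_piFinSuccAbove (fun _ : Fin (n + 1) => ℝ) (Fin.last n)
  have e₃ : MeasurePreserving (Prod.swap : ℝ × (Fin n → ℝ) → (Fin n → ℝ) × ℝ) := by
    rw [Measure.volume_eq_prod, Measure.volume_eq_prod]
    exact Measure.measurePreserving_swap
  have e₄ : MeasurePreserving (Prod.map (MeasurableEquiv.toLp 2 (Fin n → ℝ)) (id : ℝ → ℝ)) := by
    rw [Measure.volume_eq_prod, Measure.volume_eq_prod]
    exact (EuclideanSpace.volume_preserving_symm_measurableEquiv_toLp (Fin n)).symm.prod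
      (MeasurePreserving.id _)
  convert ((e₄.comp e₃).comp e₂).comp e₁ using 1
  · rfl
  · rfl
  funext y
  ext j
  · simp [Fin.init]
  · rfl

lemma volume_eq_lintegral_volume_fiber {S : Set (EuclideanSpace ℝ (Fin (n + 1)))}
    (hS : MeasurableSet S) :
    volume S = ∫⁻ w : EuclideanSpace ℝ (Fin n), volume {t : ℝ | vlift n w t ∈ S} := by
  have hS' : MeasurableSet {p : EuclideanSpace ℝ (Fin n) × ℝ | vlift n p.1 p.2 ∈ S} :=
    continuous_vlift.measurable hS
  have hpre : (fun y : EuclideanSpace ℝ (Fin (n + 1)) => (vproj n y, y (Fin.last n))) ⁻¹'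
      {p | vlift n p.1 p.2 ∈ S} = S := by
    ext y; simp
  calc volume S = volume ((fun y : EuclideanSpace ℝ (Fin (n + 1)) =>
        (vproj n y, y (Fin.last n))) ⁻¹' {p | vlift n p.1 p.2 ∈ S}) := by rw [hpre]
    _ = _ := by
      rw [measurePreserving_vproj_prod_last.measure_preimage hS'.nullMeasurableSet,
        Measure.volume_eq_prod, Measure.prod_apply hS']
      rfl

def vband (B : Set (EuclideanSpace ℝ (Fin n))) (g : EuclideanSpace ℝ (Fin n) → ℝ) (a b : ℝ) :
    Set (EuclideanSpace ℝ (Fin (n + 1))) :=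
  {y | vproj n y ∈ B ∧ y (Fin.last n) - g (vproj n y) ∈ Icc a b}

lemma measurableSet_vband {B : Set (EuclideanSpace ℝ (Fin n))} (hB : MeasurableSet B)
    {g : EuclideanSpace ℝ (Fin n) → ℝ} (hg : Measurable g) (a b : ℝ) :
    MeasurableSet (vband B g a b) := by
  have hd : Measurable fun y : EuclideanSpace ℝ (Fin (n + 1)) =>
      y (Fin.last n) - g (vproj n y) :=
    continuous_last.measurable.sub (hg.comp continuous_vproj.measurable)
  exact (continuous_vproj.measurable hB).inter (hd measurableSet_Icc)

lemma volume_vband {B : Set (EuclideanSpace ℝ (Fin n))} (hB : MeasurableSet B)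
    {g : EuclideanSpace ℝ (Fin n) → ℝ} (hg : Measurable g) (a b : ℝ) :
    volume (vband B g a b) = ENNReal.ofReal (b - a) * volume B := by
  have hfiber : ∀ w, volume {t : ℝ | vlift n w t ∈ vband B g a b} =
      B.indicator (fun _ => ENNReal.ofReal (b - a)) w := by
    intro w
    by_cases hw : w ∈ B
    · have : {t : ℝ | vlift n w t ∈ vband B g a b} = Icc (g w + a) (g w + b) := by
        ext t; simp [vband, hw, le_sub_iff_add_le, add_comm]
      rw [indicator_of_mem hw, this, Real.volume_Icc, add_sub_add_left_eq_sub]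
    · simp [vband, hw]
  rw [volume_eq_lintegral_volume_fiber (measurableSet_vband hB hg a b),
    lintegral_congr hfiber, lintegral_indicator hB, setLIntegral_const, mul_comm]

lemma volume_setOf_forall_abs_le (r : ℝ) :
    volume {w : EuclideanSpace ℝ (Fin n) | ∀ j, |w j| ≤ r} = ENNReal.ofReal (2 * r) ^ n := by
  have hpre : {w : EuclideanSpace ℝ (Fin n) | ∀ j, |w j| ≤ r} =
      (MeasurableEquiv.toLp 2 (Fin n → ℝ)).symm ⁻¹' univ.pi fun _ => Icc (-r) r := by
    ext w; simp [abs_le, Pi.le_def, forall_and]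
  rw [hpre, (EuclideanSpace.volume_preserving_symm_measurableEquiv_toLp (Fin n)).measure_preimage
    (MeasurableSet.univ_pi fun _ => measurableSet_Icc).nullMeasurableSet, volume_pi_pi]
  simp [Real.volume_Icc, two_mul]

end Volume

section SupportSet

variable {n : ℕ} {K : Set (EuclideanSpace ℝ (Fin (n + 1)))}

def IsUShaped (U : Set (EuclideanSpace ℝ (Fin (n + 1)))) : Prop :=
  ∀ x ∈ U, ∀ t : ℝ, 0 ≤ t → x + t • ed n ∈ U

lemma mem_SK_iff {x : EuclideanSpace ℝ (Fin (n + 1))} :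
    x ∈ SK K ↔ ∀ u ∈ downDirs n, ⟪u, x⟫ ≤ suppFn K u := by
  simp [SK]

lemma isClosed_SK : IsClosed (SK K) :=
  isClosed_biInter fun _ _ => isClosed_le (by fun_prop) continuous_const

lemma subset_SK (hK : IsCompact K) : K ⊆ SK K := fun x hx =>
  mem_SK_iff.2 fun u _ =>
    le_csSup (hK.image (by fun_prop : Continuous fun x => ⟪u, x⟫)).bddAbove (mem_image_of_mem _ hx)

lemma neg_ed_mem_downDirs : -ed n ∈ downDirs n :=
  ⟨by simp, fun j => by simp [ed, (Fin.castSucc_lt_last j).ne]⟩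

lemma isUShaped_SK (hn : 1 ≤ n) : IsUShaped (SK K) := by
  intro x hx t ht
  refine mem_SK_iff.2 fun u hu => ?_
  have hud : u (Fin.last n) ≤ 0 := by
    linarith [hu.2 ⟨0, hn⟩, abs_nonneg (u (Fin.castSucc ⟨0, hn⟩))]
  have hux : ⟪u, ed n⟫ = u (Fin.last n) := by simp [inner_split]
  rw [inner_add_right, real_inner_smul_right, hux]
  nlinarith [mem_SK_iff.1 hx u hu]

lemma inner_vlift_nonpos {u : EuclideanSpace ℝ (Fin (n + 1))} (hu : u ∈ downDirs n)
    (a : EuclideanSpace ℝ (Fin n)) : ⟪u, vlift n a (∑ j, |a j|)⟫ ≤ 0 := by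
  have hterm : ∀ j, a j * u j.castSucc ≤ -u (Fin.last n) * |a j| := fun j => by
    nlinarith [le_abs_self (a j * u j.castSucc), abs_mul (a j) (u j.castSucc), hu.2 j,
      abs_nonneg (a j)]
  have hsum : ⟪vproj n u, a⟫ ≤ ∑ j, -u (Fin.last n) * |a j| := by
    simpa [PiLp.inner_apply] using Finset.sum_le_sum fun j _ => hterm j
  rw [← Finset.mul_sum] at hsum
  rw [inner_split, vproj_vlift, vlift_last]
  linarith

lemma add_vlift_mem_SK {x : EuclideanSpace ℝ (Fin (n + 1))} (hx : x ∈ SK K)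
    (a : EuclideanSpace ℝ (Fin n)) : x + vlift n a (∑ j, |a j|) ∈ SK K := by
  refine mem_SK_iff.2 fun u hu => ?_
  rw [inner_add_right]
  linarith [mem_SK_iff.1 hx u hu, inner_vlift_nonpos hu a]

lemma neg_suppFn_le_last {x : EuclideanSpace ℝ (Fin (n + 1))} (hx : x ∈ SK K) :
    -suppFn K (-ed n) ≤ x (Fin.last n) := by
  have h := mem_SK_iff.1 hx _ neg_ed_mem_downDirs
  rw [inner_neg_left, inner_split] at h
  simp only [vproj_ed, inner_zero_left, ed_last, one_mul, zero_add] at h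
  linarith

lemma vlift_fK_mem_SK (hK : IsCompact K) (hne : K.Nonempty) (y : EuclideanSpace ℝ (Fin n)) :
    vlift n y (fK K y) ∈ SK K := by
  have hclosed : IsClosed {t : ℝ | vlift n y t ∈ SK K} :=
    isClosed_SK.preimage (continuous_vlift.comp (Continuous.prodMk_right y))
  have hbdd : BddBelow {t : ℝ | vlift n y t ∈ SK K} :=
    ⟨-suppFn K (-ed n), fun t ht => by simpa using neg_suppFn_le_last ht⟩
  obtain ⟨k, hk⟩ := hne
  have hfiber : {t : ℝ | vlift n y t ∈ SK K}.Nonempty := by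
    refine ⟨k (Fin.last n) + ∑ j, |(y - vproj n k) j|, ?_⟩
    simpa [add_vlift] using add_vlift_mem_SK (subset_SK hK hk) (y - vproj n k)
  exact hclosed.csInf_mem hfiber hbdd

lemma Koplus_mono {α β : ℝ} (h : α ≤ β) : Koplus K α ⊆ Koplus K β :=
  fun _ hy => le_trans hy h

lemma add_mem_Koplus {α : ℝ} {y : EuclideanSpace ℝ (Fin n)} (hy : y ∈ Koplus K α)
    (a : EuclideanSpace ℝ (Fin n)) : y + a ∈ Koplus K (α + ‖a‖) := by
  have h := infDist_le_infDist_add_dist (x := y + a) (y := y) (s := vproj n '' K)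
  rw [dist_eq_norm, add_sub_cancel_left] at h
  exact h.trans (by linarith [show infDist y (vproj n '' K) ≤ α from hy])

lemma isBounded_Koplus (hK : IsCompact K) (hne : K.Nonempty) (α : ℝ) :
    Bornology.IsBounded (Koplus K α) :=
  (hK.image continuous_vproj).isBounded.thickening (δ := α + 1) |>.subset fun y hy =>
    (mem_thickening_iff_infDist_lt (hne.image _)).2 (by linarith [show infDist y _ ≤ α from hy])

lemma mem_lowerBdry (hK : IsCompact K) (hne : K.Nonempty) {α : ℝ}
    {q : EuclideanSpace ℝ (Fin (n + 1))} (hq : q ∈ lowerBdry K α) :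
    q ∈ SK K ∧ vproj n q ∈ Koplus K α := by
  obtain ⟨w, hw, rfl⟩ := hq
  exact ⟨vlift_fK_mem_SK hK hne w, by simpa using hw⟩

lemma subset_Krestr (hK : IsCompact K) {α : ℝ} (hα : 0 ≤ α) : K ⊆ Krestr K α := fun _ hx =>
  ⟨subset_SK hK hx, (infDist_zero_of_mem (mem_image_of_mem _ hx)).trans_le hα⟩

end SupportSet

section Dual

variable {n : ℕ} {U : Set (EuclideanSpace ℝ (Fin (n + 1)))}

def dualFn (U : Set (EuclideanSpace ℝ (Fin (n + 1)))) (w : EuclideanSpace ℝ (Fin n)) : ℝ :=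
  sSup ((fun z => ⟪w, vproj n z⟫ - z (Fin.last n)) '' U)

lemma isClosed_Udual : IsClosed (Udual U) := by
  have : Udual U = ⋂ z ∈ U,
      {y | ⟪vproj n y, vproj n z⟫ - z (Fin.last n) ≤ y (Fin.last n)} := by
    ext y; simp [Udual]
  rw [this]
  exact isClosed_biInter fun z _ => isClosed_le (by fun_prop) continuous_last

lemma convex_Udual : Convex ℝ (Udual U) := by
  intro x hx y hy a b ha hb hab z hz
  have hx' := mul_le_mul_of_nonneg_left (hx z hz) ha
  have hy' := mul_le_mul_of_nonneg_left (hy z hz) hb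
  simp only [vproj_add, vproj_smul, inner_add_left, real_inner_smul_left, PiLp.add_apply,
    PiLp.smul_apply, smul_eq_mul]
  linear_combination hx' + hy' + z (Fin.last n) * hab

lemma isUShaped_Udual : IsUShaped (Udual U) := by
  intro y hy t ht z hz
  simpa using (hy z hz).trans (le_add_of_nonneg_right ht)

variable (hb : ∀ w, BddAbove ((fun z => ⟪w, vproj n z⟫ - z (Fin.last n)) '' U))
include hb

lemma le_dualFn {z : EuclideanSpace ℝ (Fin (n + 1))} (hz : z ∈ U) (w : EuclideanSpace ℝ (Fin n)) :
    ⟪w, vproj n z⟫ - z (Fin.last n) ≤ dualFn U w :=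
  le_csSup (hb w) (mem_image_of_mem _ hz)

lemma mem_Udual_iff_dualFn_le (hne : U.Nonempty) {y : EuclideanSpace ℝ (Fin (n + 1))} :
    y ∈ Udual U ↔ dualFn U (vproj n y) ≤ y (Fin.last n) := by
  refine ⟨fun hy => csSup_le (hne.image _) ?_, fun hy z hz => (le_dualFn hb hz _).trans hy⟩
  rintro _ ⟨z, hz, rfl⟩
  exact hy z hz

lemma vlift_dualFn_mem_frontier (hne : U.Nonempty) (w : EuclideanSpace ℝ (Fin n)) :
    vlift n w (dualFn U w) ∈ frontier (Udual U) := by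
  rw [isClosed_Udual.frontier_eq]
  refine ⟨(mem_Udual_iff_dualFn_le hb hne).2 (by simp), fun hint => ?_⟩
  obtain ⟨δ, hδ, hball⟩ := Metric.isOpen_iff.1 isOpen_interior _ hint
  have hdist : dist (vlift n w (dualFn U w) + (-(δ / 2)) • ed n) (vlift n w (dualFn U w)) < δ := by
    rw [dist_eq_norm, add_sub_cancel_left, norm_smul, norm_ed, mul_one,
      Real.norm_eq_abs, abs_neg, abs_of_pos (half_pos hδ)]
    exact half_lt_self hδ
  have hlow := (mem_Udual_iff_dualFn_le hb hne).1 (interior_subset (hball hdist))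
  rw [add_smul_ed] at hlow
  simp only [vproj_vlift, vlift_last] at hlow
  linarith

lemma lowerSemicontinuous_dualFn (hne : U.Nonempty) : LowerSemicontinuous (dualFn U) := by
  intro w a ha
  obtain ⟨_, ⟨z, hz, rfl⟩, hlt⟩ := exists_lt_of_lt_csSup (hne.image _) ha
  have hopen : IsOpen {w' : EuclideanSpace ℝ (Fin n) | a < ⟪w', vproj n z⟫ - z (Fin.last n)} :=
    isOpen_lt continuous_const (by fun_prop)
  filter_upwards [hopen.mem_nhds hlt] with w' hw'
  exact hw'.trans_le (le_dualFn hb hz w')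

end Dual

lemma bddAbove_Krestr {n : ℕ} {K : Set (EuclideanSpace ℝ (Fin (n + 1)))} (hK : IsCompact K)
    (hne : K.Nonempty) (α : ℝ) (w : EuclideanSpace ℝ (Fin n)) :
    BddAbove ((fun z => ⟪w, vproj n z⟫ - z (Fin.last n)) '' Krestr K α) := by
  obtain ⟨R, hR⟩ := (isBounded_iff_forall_norm_le).1 (isBounded_Koplus hK hne α)
  refine ⟨‖w‖ * R + suppFn K (-ed n), ?_⟩
  rintro _ ⟨z, hz, rfl⟩
  have hinner : ⟪w, vproj n z⟫ ≤ ‖w‖ * R :=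
    (real_inner_le_norm _ _).trans (mul_le_mul_of_nonneg_left (hR _ hz.2) (norm_nonneg w))
  linarith [neg_suppFn_le_last hz.1]

section Caps

variable {n : ℕ} {K : Set (EuclideanSpace ℝ (Fin (n + 1)))}

/-- The caps of the statement are `Udual U ∩ {y | capHeight q y ≤ ε}`. -/
def capHeight (q : EuclideanSpace ℝ (Fin (n + 1))) :
    EuclideanSpace ℝ (Fin (n + 1)) →ᵃ[ℝ] ℝ where
  toFun y := y (Fin.last n) - (⟪vproj n q, vproj n y⟫ - q (Fin.last n))
  linear :=
    { toFun := fun v => v (Fin.last n) - ⟪vproj n q, vproj n v⟫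
      map_add' := fun v v' => by simp only [vproj_add, inner_add_right, PiLp.add_apply]; ring
      map_smul' := fun c v => by
        simp only [vproj_smul, real_inner_smul_right, PiLp.smul_apply, smul_eq_mul,
          RingHom.id_apply]
        ring }
  map_vadd' p v := by
    simp only [vadd_eq_add, vproj_add, inner_add_right, PiLp.add_apply, LinearMap.coe_mk,
      AddHom.coe_mk]
    ring

@[simp] lemma capHeight_apply (q y : EuclideanSpace ℝ (Fin (n + 1))) :
    capHeight q y = y (Fin.last n) - (⟪vproj n q, vproj n y⟫ - q (Fin.last n)) := rfl

lemma capHeight_le_iff {q y : EuclideanSpace ℝ (Fin (n + 1))} {a : ℝ} :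
    capHeight q y ≤ a ↔ y (Fin.last n) ≤ ⟪vproj n q, vproj n y⟫ - q (Fin.last n) + a := by
  rw [capHeight_apply, sub_le_iff_le_add']

lemma capHeight_eq_iff {q y : EuclideanSpace ℝ (Fin (n + 1))} {a : ℝ} :
    capHeight q y = a ↔ y (Fin.last n) = ⟪vproj n q, vproj n y⟫ - q (Fin.last n) + a := by
  rw [capHeight_apply, sub_eq_iff_eq_add']

lemma capHeight_nonneg {U : Set (EuclideanSpace ℝ (Fin (n + 1)))}
    {q y : EuclideanSpace ℝ (Fin (n + 1))} (hq : q ∈ U) (hy : y ∈ Udual U) :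
    0 ≤ capHeight q y := by
  have := hy q hq
  rw [real_inner_comm] at this
  simp only [capHeight_apply]
  linarith

/-- `u_d ≤ 0` since `S(K)` is U-shaped, and `u_d ≠ 0` since `S(K)` projects onto `ℝ^{d-1}`. -/
lemma last_neg_of_outward_normal (hn : 1 ≤ n) {q u : EuclideanSpace ℝ (Fin (n + 1))}
    (hq : q ∈ SK K) (hu : u ≠ 0) (hnormal : ∀ x ∈ SK K, ⟪u, x - q⟫ ≤ 0) :
    u (Fin.last n) < 0 := by
  have hle : u (Fin.last n) ≤ 0 := by
    simpa [inner_split] using hnormal _ (isUShaped_SK hn q hq 1 zero_le_one)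
  refine hle.lt_of_ne fun h0 => hu ?_
  have hproj : vproj n u = 0 := by
    have := hnormal _ (add_vlift_mem_SK hq (vproj n u))
    rw [add_sub_cancel_left, inner_split, vproj_vlift, h0, zero_mul, add_zero,
      real_inner_self_eq_norm_sq] at this
    exact norm_eq_zero.1 (pow_eq_zero_iff two_ne_zero |>.1 (le_antisymm this (sq_nonneg _)))
  rw [← vlift_vproj u, hproj, h0]
  ext i; induction i using Fin.lastCases <;> simp

/-- The supporting hyperplane of `S(K)` at `q` with normal `u` is not vertical; its slope
`û / (-u_d)` gives the dual point. -/
lemma exists_capHeight_eq_zero (hn : 1 ≤ n) {q u : EuclideanSpace ℝ (Fin (n + 1))}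
    (hq : q ∈ SK K) (hu : u ≠ 0) (hnormal : ∀ x ∈ SK K, ⟪u, x - q⟫ ≤ 0)
    {U : Set (EuclideanSpace ℝ (Fin (n + 1)))} (hU : U ⊆ SK K) :
    ∃ y₀ ∈ Udual U, capHeight q y₀ = 0 := by
  have hc : 0 < -u (Fin.last n) := neg_pos.2 (last_neg_of_outward_normal hn hq hu hnormal)
  set w₀ := (-u (Fin.last n))⁻¹ • vproj n u
  refine ⟨vlift n w₀ (⟪vproj n q, w₀⟫ - q (Fin.last n)), fun z hz => ?_, by simp⟩
  have key := hnormal z (hU hz)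
  rw [inner_split, vproj_sub, inner_sub_right, PiLp.sub_apply] at key
  simp only [vproj_vlift, vlift_last, w₀, real_inner_smul_left, real_inner_smul_right,
    real_inner_comm (vproj n u) (vproj n q)]
  have hinv : (-u (Fin.last n))⁻¹ * -u (Fin.last n) = 1 := inv_mul_cancel₀ hc.ne'
  have hscaled := mul_nonneg (inv_nonneg.2 hc.le) (neg_nonneg.2 key)
  linear_combination hscaled + (z (Fin.last n) - q (Fin.last n)) * hinv

lemma mem_Krestr_of_mem_lowerBdry (hK : IsCompact K) (hne : K.Nonempty) {ε : ℝ} (hε : 0 ≤ ε)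
    {q : EuclideanSpace ℝ (Fin (n + 1))} (hq : q ∈ lowerBdry K ε) : q ∈ Krestr K (2 * ε) :=
  ⟨(mem_lowerBdry hK hne hq).1, Koplus_mono (by linarith) (mem_lowerBdry hK hne hq).2⟩

lemma abs_vproj_le_two_of_capHeight_le {ε : ℝ} (hε : 0 < ε) {q y : EuclideanSpace ℝ (Fin (n + 1))}
    (hq : q ∈ SK K) (hq' : vproj n q ∈ Koplus K ε) (hy : y ∈ Udual (Krestr K (2 * ε)))
    (hh : capHeight q y ≤ ε) (j : Fin n) : |vproj n y j| ≤ 2 := by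
  have key : ∀ c : ℝ, |c| = ε → c * vproj n y j ≤ 2 * ε := by
    intro c hc
    have hsum : ∑ i, |EuclideanSpace.single j c i| = ε := by
      simp [PiLp.single_apply, apply_ite, hc]
    have hz := add_vlift_mem_SK hq (EuclideanSpace.single j c)
    rw [hsum, add_vlift] at hz
    have hzU : vlift n (vproj n q + EuclideanSpace.single j c) (q (Fin.last n) + ε) ∈
        Krestr K (2 * ε) := by
      refine ⟨hz, ?_⟩
      simpa [hc, two_mul] using add_mem_Koplus hq' (EuclideanSpace.single j c)
    have h := hy _ hzU
    simp only [vproj_vlift, vlift_last, inner_add_right, EuclideanSpace.inner_single_right,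
      conj_trivial] at h
    simp only [capHeight_apply] at hh
    linarith [real_inner_comm (vproj n q) (vproj n y)]
  have h₁ := key ε (abs_of_pos hε)
  have h₂ := key (-ε) (by rw [abs_neg, abs_of_pos hε])
  rw [abs_le]
  constructor <;> nlinarith

end Caps

section Slab

variable {n : ℕ} {K : Set (EuclideanSpace ℝ (Fin (n + 1)))} {ε : ℝ}

def dualSlab (K : Set (EuclideanSpace ℝ (Fin (n + 1)))) (ε : ℝ) :
    Set (EuclideanSpace ℝ (Fin (n + 1))) :=
  vband {w | ∀ j, |w j| ≤ 2} (dualFn (Krestr K (2 * ε))) 0 ε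

lemma cap_subset_dualSlab (hK : IsCompact K) (hne : K.Nonempty) (hε : 0 < ε)
    {q : EuclideanSpace ℝ (Fin (n + 1))} (hq : q ∈ lowerBdry K ε) :
    Udual (Krestr K (2 * ε)) ∩ {y | capHeight q y ≤ ε} ⊆ dualSlab K ε := by
  rintro y ⟨hy, hh⟩
  have hb := bddAbove_Krestr hK hne (2 * ε)
  have hUne : (Krestr K (2 * ε)).Nonempty := hne.mono (subset_Krestr hK (by positivity))
  have hplane := le_dualFn hb (mem_Krestr_of_mem_lowerBdry hK hne hε.le hq) (vproj n y)
  have hgraph := (mem_Udual_iff_dualFn_le hb hUne).1 hy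
  simp only [mem_ofPred_eq, capHeight_apply] at hh
  refine ⟨abs_vproj_le_two_of_capHeight_le hε (mem_lowerBdry hK hne hq).1
    (mem_lowerBdry hK hne hq).2 hy hh, sub_nonneg.2 hgraph, ?_⟩
  linarith [real_inner_comm (vproj n q) (vproj n y)]

lemma volume_dualSlab (hK : IsCompact K) (hne : K.Nonempty) (hε : 0 ≤ ε) :
    volume (dualSlab K ε) = ENNReal.ofReal ε * ENNReal.ofReal 4 ^ n := by
  have hcube : MeasurableSet {w : EuclideanSpace ℝ (Fin n) | ∀ j, |w j| ≤ 2} := by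
    simp_rw [ofPred_forall]
    exact MeasurableSet.iInter fun j => measurableSet_le (by fun_prop) measurable_const
  have hmeas : Measurable (dualFn (Krestr K (2 * ε))) :=
    (lowerSemicontinuous_dualFn (bddAbove_Krestr hK hne _)
      (hne.mono (subset_Krestr hK (by positivity)))).measurable
  rw [dualSlab, volume_vband hcube hmeas, volume_setOf_forall_abs_le, sub_zero]
  norm_num

end Slab

section Macbeath

variable {E : Type*} [AddCommGroup E] [Module ℝ E] {C : Set E} {x y z : E}

def macbeathRegion (C : Set E) (x : E) : Set E := C ∩ {y | (2 : ℝ) • x - y ∈ C}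

def halfMacbeathRegion (C : Set E) (x : E) : Set E := {z | (2 : ℝ) • z - x ∈ macbeathRegion C x}

lemma mem_of_two_smul_sub_mem (hC : Convex ℝ C) (hx : x ∈ C) (hz : (2 : ℝ) • z - x ∈ C) :
    z ∈ C := by
  convert hC hx hz (by norm_num : (0 : ℝ) ≤ 1 / 2) (by norm_num : (0 : ℝ) ≤ 1 / 2) (by norm_num)
    using 1
  module

lemma halfMacbeathRegion_subset (hC : Convex ℝ C) (hx : x ∈ C) :
    halfMacbeathRegion C x ⊆ macbeathRegion C x := by
  rintro z ⟨hz₁, hz₂⟩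
  refine ⟨mem_of_two_smul_sub_mem hC hx hz₁, ?_⟩
  show (2 : ℝ) • x - z ∈ C
  refine mem_of_two_smul_sub_mem hC hx ?_
  have hz₂ : (2 : ℝ) • x - ((2 : ℝ) • z - x) ∈ C := hz₂
  convert hz₂ using 1
  module

/-- Macbeath's lemma. -/
lemma combo_mem_macbeathRegion (hC : Convex ℝ C) (hx : x ∈ C) (hy : y ∈ C)
    (h : (halfMacbeathRegion C x ∩ halfMacbeathRegion C y).Nonempty) :
    (1 / 5 : ℝ) • x + (4 / 5 : ℝ) • y ∈ macbeathRegion C y := by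
  obtain ⟨z, ⟨hzx, -⟩, -, hzy⟩ := h
  refine ⟨hC hx hy (by norm_num) (by norm_num) (by norm_num), ?_⟩
  have hmid := hC hzy hzx (by norm_num : (0 : ℝ) ≤ 1 / 2) (by norm_num : (0 : ℝ) ≤ 1 / 2)
    (by norm_num)
  show (2 : ℝ) • y - ((1 / 5 : ℝ) • x + (4 / 5 : ℝ) • y) ∈ C
  convert hC hy hmid (by norm_num : (0 : ℝ) ≤ 3 / 5) (by norm_num : (0 : ℝ) ≤ 2 / 5)
    (by norm_num) using 1
  module

lemma le_two_mul_of_mem_macbeathRegion (f : E →ᵃ[ℝ] ℝ) (hf : ∀ w ∈ C, 0 ≤ f w)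
    (hz : z ∈ macbeathRegion C x) : f z ≤ 2 * f x := by
  have hrefl : f ((2 : ℝ) • x + (-1 : ℝ) • z) = 2 * f x + -1 * f z :=
    Convex.combo_affine_apply (by norm_num)
  have hnonneg := hf _ hz.2
  rw [show (2 : ℝ) • x - z = (2 : ℝ) • x + (-1 : ℝ) • z by module, hrefl] at hnonneg
  linarith

lemma le_six_mul_of_halfMacbeathRegion_inter (hC : Convex ℝ C) (f : E →ᵃ[ℝ] ℝ)
    (hf : ∀ w ∈ C, 0 ≤ f w) (hx : x ∈ C) (hy : y ∈ C)
    (h : (halfMacbeathRegion C x ∩ halfMacbeathRegion C y).Nonempty) : f x ≤ 6 * f y := by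
  set m := (1 / 5 : ℝ) • x + (4 / 5 : ℝ) • y
  have hm := le_two_mul_of_mem_macbeathRegion f hf (combo_mem_macbeathRegion hC hx hy h)
  have hx' : f ((5 : ℝ) • m + (-4 : ℝ) • y) = 5 * f m + -4 * f y :=
    Convex.combo_affine_apply (by norm_num)
  rw [show (5 : ℝ) • m + (-4 : ℝ) • y = x by simp only [m]; module] at hx'
  linarith [hf y hy]

lemma setOf_two_smul_sub_mem_eq_image (S : Set E) (x : E) :
    {z | (2 : ℝ) • z - x ∈ S} = AffineMap.homothety x (1 / 2 : ℝ) '' S := by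
  ext z
  simp only [mem_ofPred_eq, mem_image, AffineMap.homothety_apply, vsub_eq_sub, vadd_eq_add]
  constructor
  · intro hz
    exact ⟨_, hz, by module⟩
  · rintro ⟨w, hw, rfl⟩
    convert hw using 1
    module

end Macbeath

section MacbeathVolume

variable {E : Type*} [NormedAddCommGroup E] [NormedSpace ℝ E] [MeasurableSpace E] [BorelSpace E]
  [FiniteDimensional ℝ E] (μ : Measure E) [μ.IsAddHaarMeasure]

lemma addHaar_halfMacbeathRegion (C : Set E) (x : E) :
    μ (halfMacbeathRegion C x) =
      ENNReal.ofReal ((1 / 2) ^ Module.finrank ℝ E) * μ (macbeathRegion C x) := by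
  rw [halfMacbeathRegion, setOf_two_smul_sub_mem_eq_image, Measure.addHaar_image_homothety,
    abs_of_nonneg (by positivity)]

/-- Both sides are the measure of `{(x, y) | x ∈ T, y ∈ T, 2 • x - y ∈ T}`; for `y ∈ T` its fibre
`{x | 2 • x - y ∈ T}` is the image of `T` under the homothety of ratio `1 / 2` about `y`. -/
lemma setLIntegral_addHaar_macbeathRegion {T : Set E} (hT : Convex ℝ T) (hTm : MeasurableSet T) :
    ∫⁻ x in T, μ (macbeathRegion T x) ∂μ =
      ENNReal.ofReal ((1 / 2) ^ Module.finrank ℝ E) * μ T * μ T := by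
  set W : Set (E × E) := {p | p.2 ∈ T ∧ (2 : ℝ) • p.1 - p.2 ∈ T}
  have hWm : MeasurableSet W :=
    measurable_snd hTm |>.inter (measurableSet_preimage (by fun_prop) hTm)
  have hfiber : ∀ y, μ.restrict T ((fun x => (x, y)) ⁻¹' W) =
      T.indicator (fun _ => ENNReal.ofReal ((1 / 2) ^ Module.finrank ℝ E) * μ T) y := by
    intro y
    by_cases hy : y ∈ T
    · have hset : ((fun x => (x, y)) ⁻¹' W) ∩ T = AffineMap.homothety y (1 / 2 : ℝ) '' T := by
        rw [← setOf_two_smul_sub_mem_eq_image]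
        ext x
        simp only [W, mem_inter_iff, mem_preimage, mem_ofPred_eq]
        exact ⟨fun h => h.1.2, fun h => ⟨⟨hy, h⟩, mem_of_two_smul_sub_mem hT hy h⟩⟩
      rw [Measure.restrict_apply (measurable_prodMk_right hWm), hset,
        Measure.addHaar_image_homothety, abs_of_nonneg (by positivity), indicator_of_mem hy]
    · simp [W, hy]
  calc ∫⁻ x in T, μ (macbeathRegion T x) ∂μ = (μ.restrict T).prod μ W :=
        (Measure.prod_apply hWm).symm
    _ = _ := by
      rw [Measure.prod_apply_symm hWm, lintegral_congr hfiber, lintegral_indicator hTm,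
        setLIntegral_const]

lemma exists_addHaar_macbeathRegion_ge {T : Set E} (hT : Convex ℝ T) (hTm : MeasurableSet T)
    (h0 : μ T ≠ 0) (hfin : μ T ≠ ∞) :
    ∃ x ∈ T, ENNReal.ofReal ((1 / 2) ^ Module.finrank ℝ E) * μ T ≤ μ (macbeathRegion T x) := by
  have hint := setLIntegral_addHaar_macbeathRegion μ hT hTm
  obtain ⟨x, hx, hle⟩ := exists_setLAverage_le h0 hTm.nullMeasurableSet
    (by rw [hint]; exact ENNReal.mul_ne_top (ENNReal.mul_ne_top ENNReal.ofReal_ne_top hfin) hfin)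
  refine ⟨x, hx, le_of_eq_of_le ?_ hle⟩
  rw [setLAverage_eq, hint, ENNReal.mul_div_cancel_right h0 hfin]

end MacbeathVolume

section Packing

lemma exists_max_card_finset {α : Type*} {P : Finset α → Prop} (h0 : P ∅) {N : ℕ}
    (hN : ∀ S, P S → S.card ≤ N) : ∃ S, P S ∧ ∀ S', P S' → S'.card ≤ S.card := by
  classical
  obtain ⟨S, hS, hcard⟩ : ∃ S, P S ∧ S.card = Nat.findGreatest (fun k => ∃ S, P S ∧ S.card = k) N :=
    Nat.findGreatest_spec (P := fun k => ∃ S, P S ∧ S.card = k) (Nat.zero_le N) ⟨∅, h0, rfl⟩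
  exact ⟨S, hS, fun S' hS' => hcard ▸ Nat.le_findGreatest (hN S' hS') ⟨S', hS', rfl⟩⟩

lemma card_mul_le_measure {α ι : Type*} [MeasurableSpace α] (μ : Measure α) {S : Finset ι}
    {A : ι → Set α} {B : Set α} {m : ℝ≥0∞} (hA : ∀ i ∈ S, MeasurableSet (A i))
    (hd : (S : Set ι).PairwiseDisjoint A) (hAB : ∀ i ∈ S, A i ⊆ B) (hm : ∀ i ∈ S, m ≤ μ (A i)) :
    S.card * m ≤ μ B :=
  calc S.card * m = ∑ _i ∈ S, m := by rw [Finset.sum_const, nsmul_eq_mul]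
    _ ≤ ∑ i ∈ S, μ (A i) := Finset.sum_le_sum hm
    _ = μ (⋃ i ∈ S, A i) := (measure_biUnion_finset hd hA).symm
    _ ≤ μ B := measure_mono (iUnion₂_subset hAB)

variable {E : Type*} [NormedAddCommGroup E] [NormedSpace ℝ E] {V B : Set E}

lemma isClosed_halfMacbeathRegion (hV : IsClosed V) (x : E) :
    IsClosed (halfMacbeathRegion V x) :=
  (hV.inter (hV.preimage (by fun_prop))).preimage (by fun_prop)

variable [MeasurableSpace E] {μ : Measure E} {m : ℝ≥0∞}

def IsMacbeathPacking (μ : Measure E) (V B : Set E) (m : ℝ≥0∞) (S : Finset E) : Prop :=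
  (∀ x ∈ S, x ∈ V ∧ halfMacbeathRegion V x ⊆ B ∧ m ≤ μ (halfMacbeathRegion V x)) ∧
    (S : Set E).PairwiseDisjoint (halfMacbeathRegion V)

lemma IsMacbeathPacking.card_mul_le [BorelSpace E] (hV : IsClosed V) {S : Finset E}
    (hS : IsMacbeathPacking μ V B m S) : S.card * m ≤ μ B :=
  card_mul_le_measure μ (fun x _ => (isClosed_halfMacbeathRegion hV x).measurableSet) hS.2
    (fun x hx => (hS.1 x hx).2.1) (fun x hx => (hS.1 x hx).2.2)

lemma IsMacbeathPacking.insert [DecidableEq E] {S : Finset E} (hS : IsMacbeathPacking μ V B m S)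
    {x₀ : E} (hx₀ : x₀ ∈ V ∧ halfMacbeathRegion V x₀ ⊆ B ∧ m ≤ μ (halfMacbeathRegion V x₀))
    (hdisj : ∀ x ∈ S, Disjoint (halfMacbeathRegion V x) (halfMacbeathRegion V x₀)) :
    IsMacbeathPacking μ V B m (insert x₀ S) := by
  refine ⟨fun x hx => ?_, ?_⟩
  · rcases Finset.mem_insert.1 hx with rfl | hx
    exacts [hx₀, hS.1 x hx]
  · rw [Finset.coe_insert]
    exact hS.2.insert fun x hx _ => (hdisj x hx).symm

variable [BorelSpace E] [FiniteDimensional ℝ E] [μ.IsAddHaarMeasure]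

variable (μ) in
/-- The factor `(1 / 4) ^ d` is `2 ^ (-d)` from averaging over the cap times `2 ^ (-d)` from
halving the Macbeath region. -/
lemma exists_mem_cap_halfMacbeathRegion {V : Set E} (hV : Convex ℝ V) (hVc : IsClosed V)
    (f : E →ᵃ[ℝ] ℝ) (hf : ∀ y ∈ V, 0 ≤ f y) {a : ℝ} (ha : 0 ≤ a)
    (hB : V ∩ {y | f y ≤ 6 * a} ⊆ B) (hBfin : μ B ≠ ∞) (h0 : μ (V ∩ {y | f y ≤ a}) ≠ 0) :
    ∃ x₀ ∈ V, f x₀ ≤ a ∧ halfMacbeathRegion V x₀ ⊆ B ∧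
      ENNReal.ofReal ((1 / 4) ^ Module.finrank ℝ E) * μ (V ∩ {y | f y ≤ a}) ≤
        μ (halfMacbeathRegion V x₀) := by
  set T := V ∩ {y | f y ≤ a}
  have hTB : T ⊆ B := fun y hy => hB ⟨hy.1, le_trans (show f y ≤ a from hy.2) (by linarith)⟩
  have hT : Convex ℝ T := hV.inter ((convex_Iic a).affine_preimage f)
  have hTm : MeasurableSet T :=
    (hVc.inter (isClosed_le f.continuous_of_finiteDimensional continuous_const)).measurableSet
  obtain ⟨x₀, ⟨hx₀V, hx₀a : f x₀ ≤ a⟩, hx₀⟩ := exists_addHaar_macbeathRegion_ge μ hT hTm h0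
    (ne_top_of_le_ne_top hBfin (measure_mono hTB))
  have hsub : halfMacbeathRegion V x₀ ⊆ macbeathRegion V x₀ := halfMacbeathRegion_subset hV hx₀V
  refine ⟨x₀, hx₀V, hx₀a, fun z hz => hB ⟨(hsub hz).1, ?_⟩, ?_⟩
  · show f z ≤ 6 * a
    linarith [le_two_mul_of_mem_macbeathRegion f hf (hsub hz)]
  · have hmono : macbeathRegion T x₀ ⊆ macbeathRegion V x₀ := fun z hz => ⟨hz.1.1, hz.2.1⟩
    rw [addHaar_halfMacbeathRegion, show (1 / 4 : ℝ) = 1 / 2 * (1 / 2) by norm_num, mul_pow,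
      ENNReal.ofReal_mul (by positivity), mul_assoc]
    gcongr
    exact hx₀.trans (measure_mono hmono)

lemma exists_le_of_isMacbeathPacking_max (hV : Convex ℝ V) (hVc : IsClosed V)
    (f : E →ᵃ[ℝ] ℝ) (hf : ∀ y ∈ V, 0 ≤ f y) {a : ℝ} (ha : 0 ≤ a)
    (hB : V ∩ {y | f y ≤ 6 * a} ⊆ B) (hBfin : μ B ≠ ∞) (h0 : μ (V ∩ {y | f y ≤ a}) ≠ 0)
    (hm : m ≤ ENNReal.ofReal ((1 / 4) ^ Module.finrank ℝ E) * μ (V ∩ {y | f y ≤ a}))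
    {S : Finset E} (hS : IsMacbeathPacking μ V B m S)
    (hmax : ∀ S', IsMacbeathPacking μ V B m S' → S'.card ≤ S.card) :
    ∃ x ∈ S, f x ≤ 6 * a := by
  classical
  by_contra! hfar
  obtain ⟨x₀, hx₀V, hx₀a, hx₀B, hx₀m⟩ :=
    exists_mem_cap_halfMacbeathRegion μ hV hVc f hf ha hB hBfin h0
  have hdisj : ∀ x ∈ S, Disjoint (halfMacbeathRegion V x) (halfMacbeathRegion V x₀) :=
    fun x hx => not_not.1 fun hmeet => (hfar x hx).not_ge <|
      (le_six_mul_of_halfMacbeathRegion_inter hV f hf (hS.1 x hx).1 hx₀V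
        (not_disjoint_iff_nonempty_inter.1 hmeet)).trans (by linarith)
  have hx₀S : x₀ ∉ S := fun hx₀ => (hfar x₀ hx₀).not_ge (by linarith)
  have := hmax _ (hS.insert ⟨hx₀V, hx₀B, hm.trans hx₀m⟩ hdisj)
  rw [Finset.card_insert_of_notMem hx₀S] at this
  omega

end Packing

section CapVolume

variable {n : ℕ}

lemma image_homothety_eq_preimage {F : Type*} [AddCommGroup F] [Module ℝ F] {r : ℝ} (hr : r ≠ 0)
    (c : F) (S : Set F) :
    AffineMap.homothety c r '' S = AffineMap.homothety c r⁻¹ ⁻¹' S := by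
  ext z
  constructor
  · rintro ⟨b, hb, rfl⟩
    rwa [mem_preimage, ← AffineMap.homothety_mul_apply, inv_mul_cancel₀ hr,
      AffineMap.homothety_one, AffineMap.id_apply]
  · intro hz
    refine ⟨_, hz, ?_⟩
    rw [← AffineMap.homothety_mul_apply, mul_inv_cancel₀ hr, AffineMap.homothety_one,
      AffineMap.id_apply]

lemma eq_add_smul_ed_of_vproj_eq {y p : EuclideanSpace ℝ (Fin (n + 1))}
    (h : vproj n y = vproj n p) : y = p + (y (Fin.last n) - p (Fin.last n)) • ed n := by
  rw [add_smul_ed, ← h, add_sub_cancel, vlift_vproj]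

lemma vlift_mem_of_mem_closure_base {C : Set (EuclideanSpace ℝ (Fin (n + 1)))} (hCc : IsClosed C)
    (q : EuclideanSpace ℝ (Fin (n + 1))) (a : ℝ) {w : EuclideanSpace ℝ (Fin n)}
    (hw : w ∈ closure (vproj n '' (C ∩ {y | capHeight q y = a}))) :
    vlift n w (⟪vproj n q, w⟫ - q (Fin.last n) + a) ∈ C := by
  have hcont : Continuous fun w : EuclideanSpace ℝ (Fin n) =>
      vlift n w (⟪vproj n q, w⟫ - q (Fin.last n) + a) :=
    continuous_vlift.comp (continuous_id.prodMk (by fun_prop))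
  refine closure_minimal ?_ (hCc.preimage hcont) hw
  rintro _ ⟨y, ⟨hyC, hya⟩, rfl⟩
  show vlift n (vproj n y) (⟪vproj n q, vproj n y⟫ - q (Fin.last n) + a) ∈ C
  convert hyC using 1
  rw [vlift_eq_iff]
  simp only [mem_ofPred_eq, capHeight_apply] at hya
  exact ⟨rfl, by linarith⟩

/-- Shrinking the base of the cap of height `a` towards a point `y₀` of height `0` by the factor
`r` and stacking vertical segments of length `r * a` on top gives a subset of the cap of height
`2 * r * a`. -/
lemma volume_cap_ge {C : Set (EuclideanSpace ℝ (Fin (n + 1)))} (hC : Convex ℝ C)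
    (hCc : IsClosed C) (hCu : IsUShaped C) {q y₀ : EuclideanSpace ℝ (Fin (n + 1))}
    (hy₀ : y₀ ∈ C) (hy₀q : capHeight q y₀ = 0) (a : ℝ) {r : ℝ} (hr₀ : 0 < r) (hr₁ : r ≤ 1) :
    ENNReal.ofReal (r ^ (n + 1) * a) * volume (vproj n '' (C ∩ {y | capHeight q y = a})) ≤
      volume (C ∩ {y | capHeight q y ≤ 2 * r * a}) := by
  set B := vproj n '' (C ∩ {y | capHeight q y = a})
  set B' := AffineMap.homothety (vproj n y₀) r '' closure B
  have hB'm : MeasurableSet B' := by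
    rw [show B' = _ from image_homothety_eq_preimage hr₀.ne' _ _]
    exact (isClosed_closure.preimage
      (AffineMap.homothety _ _).continuous_of_finiteDimensional).measurableSet
  set plane := fun w : EuclideanSpace ℝ (Fin n) => ⟪vproj n q, w⟫ - q (Fin.last n)
  have hplane : Continuous plane := by fun_prop
  have hband : vband B' plane (r * a) (2 * r * a) ⊆ C ∩ {y | capHeight q y ≤ 2 * r * a} := by
    rintro y ⟨⟨b, hb, hyb⟩, hlow, hhigh⟩
    set p := AffineMap.lineMap y₀ (vlift n b (plane b + a)) r
    have hpC : p ∈ C := hC.lineMap_mem hy₀ (vlift_mem_of_mem_closure_base hCc q a hb) ⟨hr₀.le, hr₁⟩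
    have htop : capHeight q (vlift n b (plane b + a)) = a := by simp [plane]
    have hpq : capHeight q p = r * a := by
      rw [AffineMap.apply_lineMap, hy₀q, htop, AffineMap.lineMap_apply_module]
      simp
    have hproj : vproj n y = vproj n p := by
      rw [← hyb, AffineMap.homothety_eq_lineMap]
      simp only [p, AffineMap.lineMap_apply_module, vproj_add, vproj_smul, vproj_vlift]
    have hyp := eq_add_smul_ed_of_vproj_eq hproj
    have hlast : y (Fin.last n) - p (Fin.last n) = capHeight q y - capHeight q p := by
      simp only [capHeight_apply, hproj]; ring
    refine ⟨hyp ▸ hCu p hpC _ ?_, hhigh⟩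
    rw [hlast, hpq]
    exact sub_nonneg.2 hlow
  calc ENNReal.ofReal (r ^ (n + 1) * a) * volume B
      ≤ ENNReal.ofReal (2 * r * a - r * a) * (ENNReal.ofReal (r ^ n) * volume (closure B)) := by
        rw [← mul_assoc, ← ENNReal.ofReal_mul' (by positivity)]
        refine mul_le_mul' (le_of_eq (congrArg _ (by ring))) (measure_mono subset_closure)
    _ = volume (vband B' plane (r * a) (2 * r * a)) := by
        rw [volume_vband hB'm hplane.measurable, Measure.addHaar_image_homothety,
          finrank_euclideanSpace_fin, abs_of_pos (by positivity)]
    _ ≤ volume (C ∩ {y | capHeight q y ≤ 2 * r * a}) := measure_mono hband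

end CapVolume

section Stabbing

variable {n : ℕ} {K : Set (EuclideanSpace ℝ (Fin (n + 1)))} {ε t : ℝ}

lemma card_le_of_isMacbeathPacking (hε : 0 < ε) (ht : 0 < t)
    {S : Finset (EuclideanSpace ℝ (Fin (n + 1)))} {V B : Set (EuclideanSpace ℝ (Fin (n + 1)))}
    (hV : IsClosed V)
    (hB : volume B = ENNReal.ofReal ε * ENNReal.ofReal 4 ^ n)
    (hS : IsMacbeathPacking volume V B (ENNReal.ofReal ((1 / 48) ^ (n + 1) * t * ε)) S) :
    (S.card : ℝ) ≤ 4 ^ n * 48 ^ (n + 1) / t := by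
  have h := hS.card_mul_le hV
  rw [hB, ← ENNReal.ofReal_pow (by norm_num), ← ENNReal.ofReal_mul hε.le,
    ← ENNReal.ofReal_natCast, ← ENNReal.ofReal_mul (Nat.cast_nonneg _),
    ENNReal.ofReal_le_ofReal_iff (by positivity)] at h
  have hone : (1 / 48 : ℝ) ^ (n + 1) * 48 ^ (n + 1) = 1 := by rw [← mul_pow]; norm_num
  rw [le_div_iff₀ ht]
  refine le_of_mul_le_mul_right ?_ (mul_pos hε (pow_pos (by norm_num : (0 : ℝ) < 1 / 48) (n + 1)))
  linear_combination h - ε * 4 ^ n * hone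

lemma exists_max_isMacbeathPacking (hK : IsCompact K) (hne : K.Nonempty) (hε : 0 < ε)
    (ht : 0 < t) :
    ∃ S, IsMacbeathPacking volume (Udual (Krestr K (2 * ε))) (dualSlab K ε)
        (ENNReal.ofReal ((1 / 48) ^ (n + 1) * t * ε)) S ∧
      (S.card : ℝ) ≤ 4 ^ n * 48 ^ (n + 1) / t ∧
      ∀ S', IsMacbeathPacking volume (Udual (Krestr K (2 * ε))) (dualSlab K ε)
        (ENNReal.ofReal ((1 / 48) ^ (n + 1) * t * ε)) S' → S'.card ≤ S.card := by
  have hcard := fun S => card_le_of_isMacbeathPacking (S := S) (V := Udual (Krestr K (2 * ε))) hε ht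
    isClosed_Udual (volume_dualSlab hK hne hε.le)
  obtain ⟨S, hS, hmax⟩ := exists_max_card_finset ⟨by simp, by simp⟩
    fun S hS => Nat.le_floor (hcard S hS)
  exact ⟨S, hS, hcard S hS, hmax⟩

lemma exists_stabbing_set (hK : IsCompact K) (hne : K.Nonempty) (hε : 0 < ε) (ht : 0 < t) :
    ∃ S : Finset (EuclideanSpace ℝ (Fin (n + 1))),
      (∀ x ∈ S, x ∈ Udual (Krestr K (2 * ε))) ∧ (S.card : ℝ) ≤ 4 ^ n * 48 ^ (n + 1) / t ∧
      ∀ q ∈ lowerBdry K ε, ∀ y₀ ∈ Udual (Krestr K (2 * ε)), capHeight q y₀ = 0 →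
        ENNReal.ofReal t ≤
          volume (vproj n '' (Udual (Krestr K (2 * ε)) ∩ {y | capHeight q y = ε})) →
        ∃ x ∈ S, capHeight q x ≤ ε := by
  obtain ⟨S, hS, hcard, hmax⟩ := exists_max_isMacbeathPacking hK hne hε ht
  refine ⟨S, fun x hx => (hS.1 x hx).1, hcard, fun q hq y₀ hy₀ hy₀q hbase => ?_⟩
  set T := Udual (Krestr K (2 * ε)) ∩ {y | capHeight q y ≤ ε / 6}
  have hcap : ENNReal.ofReal ((1 / 12) ^ (n + 1) * ε) * ENNReal.ofReal t ≤ volume T := by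
    have h := volume_cap_ge convex_Udual isClosed_Udual isUShaped_Udual hy₀ hy₀q ε
      (r := 1 / 12) (by norm_num) (by norm_num)
    rw [show 2 * (1 / 12) * ε = ε / 6 by ring] at h
    exact (mul_le_mul_right hbase _).trans h
  have hm : ENNReal.ofReal ((1 / 48) ^ (n + 1) * t * ε) ≤
      ENNReal.ofReal ((1 / 4) ^ Module.finrank ℝ (EuclideanSpace ℝ (Fin (n + 1)))) * volume T := by
    refine le_trans (le_of_eq ?_) (mul_le_mul_right hcap _)
    rw [finrank_euclideanSpace_fin, ← ENNReal.ofReal_mul (by positivity),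
      ← ENNReal.ofReal_mul (by positivity), show (1 / 48 : ℝ) = 1 / 4 * (1 / 12) by norm_num,
      mul_pow]
    ring_nf
  have h0 : volume T ≠ 0 :=
    ((ENNReal.mul_pos (by simp; positivity) (by simpa using ht)).trans_le hcap).ne'
  have hB : Udual (Krestr K (2 * ε)) ∩ {y | capHeight q y ≤ 6 * (ε / 6)} ⊆ dualSlab K ε := by
    rw [mul_div_cancel₀ ε (by norm_num : (6 : ℝ) ≠ 0)]
    exact cap_subset_dualSlab hK hne hε hq
  obtain ⟨x, hxS, hx⟩ := exists_le_of_isMacbeathPacking_max convex_Udual isClosed_Udual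
    (capHeight q) (fun y hy => capHeight_nonneg (mem_Krestr_of_mem_lowerBdry hK hne hε.le hq) hy)
    (by positivity) hB (by rw [volume_dualSlab hK hne hε.le]; finiteness) h0 hm hS hmax
  exact ⟨x, hxS, by linarith⟩

lemma capHeight_vlift_dualFn_le {U : Set (EuclideanSpace ℝ (Fin (n + 1)))}
    (hb : ∀ w, BddAbove ((fun z => ⟪w, vproj n z⟫ - z (Fin.last n)) '' U)) (hne : U.Nonempty)
    (q : EuclideanSpace ℝ (Fin (n + 1))) {y : EuclideanSpace ℝ (Fin (n + 1))} (hy : y ∈ Udual U) :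
    capHeight q (vlift n (vproj n y) (dualFn U (vproj n y))) ≤ capHeight q y := by
  simpa using (mem_Udual_iff_dualFn_le hb hne).1 hy

end Stabbing

/-- stabbing large caps in the dual: there is `c_d > 0` such that, for a
convex body `K ⊆ [−(1−2ε), 1−2ε]^d`, `U = K^{(2ε)}` and any `t > 0`, there is a set
`P ⊆ frontier U*` of at most `c_d / t` points stabbing every useful `ε`-cap of `U*`
whose base has projected area at least `t`. -/
theorem stab_large_caps_in_dual (n : ℕ) (hn : 1 ≤ n) :
    ∃ c : ℝ, 0 < c ∧
      ∀ (K : Set (EuclideanSpace ℝ (Fin (n + 1)))),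
        IsCompact K → Convex ℝ K → (interior K).Nonempty →
        ∀ ε : ℝ, 0 < ε →
        (∀ x ∈ K, ∀ i : Fin (n + 1), |x i| ≤ 1 - 2 * ε) →
        ∀ t : ℝ, 0 < t →
        ∃ P : Finset (EuclideanSpace ℝ (Fin (n + 1))),
          (P : Set (EuclideanSpace ℝ (Fin (n + 1)))) ⊆ frontier (Udual (Krestr K (2 * ε))) ∧
          (P.card : ℝ) ≤ c / t ∧
          (∀ q ∈ lowerBdry K ε, ∀ u : EuclideanSpace ℝ (Fin (n + 1)), ‖u‖ = 1 →
            (∀ x ∈ SK K, ⟪u, x - q⟫ ≤ 0) →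
            ENNReal.ofReal t ≤
              volume (vproj n ''
                (Udual (Krestr K (2 * ε)) ∩
                  {y : EuclideanSpace ℝ (Fin (n + 1)) |
                    y (Fin.last n) = ⟪vproj n q, vproj n y⟫ - q (Fin.last n) + ε})) →
            ∃ y ∈ P, y (Fin.last n) ≤ ⟪vproj n q, vproj n y⟫ - q (Fin.last n) + ε) := by
  classical
  refine ⟨4 ^ n * 48 ^ (n + 1), by positivity, fun K hK _ hint ε hε _ t ht => ?_⟩
  have hne : K.Nonempty := hint.mono interior_subset
  have hb := bddAbove_Krestr hK hne (2 * ε)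
  have hUne : (Krestr K (2 * ε)).Nonempty := hne.mono (subset_Krestr hK (by positivity))
  obtain ⟨S, hSV, hcard, hstab⟩ := exists_stabbing_set hK hne hε ht
  set toGraph := fun x : EuclideanSpace ℝ (Fin (n + 1)) =>
    vlift n (vproj n x) (dualFn (Krestr K (2 * ε)) (vproj n x))
  refine ⟨S.image toGraph, ?_, (Nat.cast_le.2 Finset.card_image_le).trans hcard, ?_⟩
  · rw [Finset.coe_image, image_subset_iff]
    exact fun x _ => vlift_dualFn_mem_frontier hb hUne _
  · intro q hq u hu hnormal hbase
    obtain ⟨y₀, hy₀, hy₀q⟩ := exists_capHeight_eq_zero hn (mem_lowerBdry hK hne hq).1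
      (norm_ne_zero_iff.1 (hu ▸ one_ne_zero)) hnormal inter_subset_left
    obtain ⟨x, hxS, hx⟩ := hstab q hq y₀ hy₀ hy₀q (by simpa only [capHeight_eq_iff] using hbase)
    exact ⟨toGraph x, Finset.mem_image_of_mem _ hxS,
      capHeight_le_iff.1 ((capHeight_vlift_dualFn_le hb hUne q (hSV x hxS)).trans hx)⟩

end
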